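/- arXiv:2202.07569 — 10 statements merged into one kernel-verified Lean document; each statement's English description precedes it below -/
import Mathlib

section
/- Let R be a commutative ring in which k! is invertible, and let x, y : Fin m → R be vectors with all entries in {0,1}, each having exactly k entries equal to 1. Set k' = ∑_{i ∈ Fin m} x i · y i and e = (k!)⁻¹ · ∏_{i=0}^{k-1} (k' − i), where natural numbers are coerced into R. Then e = 1 if x = y and e = 0 otherwise (the arithmetic constant-weight equality operator is an equality operator). -/
/-!
For `0/1`-vectors `x, y` the inner product `k' = ∑ i, x i * y i` counts the common support
`{x = 1} ∩ {y = 1}`, so `∏_{i<k} (k' - i)` is the descending factorial `k'.descFactorial k`.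
If `x = y` then `k' = k` and this is `k!`; otherwise the two supports are distinct sets of size
`k`, so `k' < k` and the descending factorial vanishes.
-/

open Finset

theorem Finset.card_inter_lt_of_ne {α : Type*} [DecidableEq α] {s t : Finset α} {k : ℕ}
    (hs : #s = k) (ht : #t = k) (hst : s ≠ t) : #(s ∩ t) < k := by
  refine lt_of_le_of_ne (hs ▸ card_le_card inter_subset_left) fun h => hst ?_
  have hs_sub : s ⊆ t := inter_eq_left.mp (eq_of_subset_of_card_le inter_subset_left (by omega))
  exact eq_of_subset_of_card_le hs_sub (by omega)

section BinaryVectors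

variable {ι R : Type*} [Fintype ι] [CommRing R] [DecidableEq R] {x y : ι → R}

theorem sum_mul_eq_card_filter_and_of_binary (hx : ∀ i, x i = 0 ∨ x i = 1)
    (hy : ∀ i, y i = 0 ∨ y i = 1) :
    ∑ i, x i * y i = (#{i | x i = 1 ∧ y i = 1} : R) := by
  rw [natCast_card_filter]
  refine sum_congr rfl fun i _ => ?_
  rcases hx i with hxi | hxi <;> rcases hy i with hyi | hyi <;> simp [hxi, hyi]

theorem eq_of_filter_eq_one_eq_of_binary (hx : ∀ i, x i = 0 ∨ x i = 1)
    (hy : ∀ i, y i = 0 ∨ y i = 1) (h : univ.filter (x · = 1) = univ.filter (y · = 1)) :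
    x = y := by
  funext i
  have hi : x i = 1 ↔ y i = 1 := by simpa using congrArg (i ∈ ·) h
  rcases hx i with hxi | hxi <;> rcases hy i with hyi | hyi <;> simp_all

end BinaryVectors

/-- **Arithmetic constant-weight equality operator.** Let `R` be a commutative ring in which
`k!` is invertible, and `x y : Fin m → R` vectors with all entries in `{0,1}`, each having
exactly `k` entries equal to `1`. With `k' = ∑ i, x i * y i` and
`e = (k!)⁻¹ * ∏_{i=0}^{k-1} (k' - i)`, we have `e = 1` if `x = y` and `e = 0` otherwise. -/
theorem arithmetic_constant_weight_equality_operator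
    {R : Type*} [CommRing R] [DecidableEq R]
    {m k : ℕ} (x y : Fin m → R)
    (hfac : IsUnit ((k.factorial : R)))
    (hx01 : ∀ i, x i = 0 ∨ x i = 1) (hy01 : ∀ i, y i = 0 ∨ y i = 1)
    (hxk : (Finset.univ.filter (fun i => x i = 1)).card = k)
    (hyk : (Finset.univ.filter (fun i => y i = 1)).card = k) :
    Ring.inverse ((k.factorial : R)) *
      (∏ i ∈ Finset.range k, ((∑ j : Fin m, x j * y j) - (i : R))) =
    if x = y then 1 else 0 := by
  rw [sum_mul_eq_card_filter_and_of_binary hx01 hy01, ← descPochhammer_eval_eq_prod_range,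
    descPochhammer_eval_eq_descFactorial]
  split_ifs with hxy
  · subst hxy
    simp only [and_self, hxk, Nat.descFactorial_self]
    exact Ring.inverse_mul_cancel _ hfac
  · have hsupp : univ.filter (x · = 1) ≠ univ.filter (y · = 1) :=
      fun h => hxy (eq_of_filter_eq_one_eq_of_binary hx01 hy01 h)
    have hlt := card_inter_lt_of_ne hxk hyk hsupp
    rw [← filter_and, ← Nat.descFactorial_eq_zero_iff_lt] at hlt
    rw [hlt, Nat.cast_zero, mul_zero]
end

section
/- Let R be a nontrivial commutative ring, and let E : Fin n → (Fin m → R) be an injective map such that for every i, the vector E i has all entries in {0,1} and exactly k entries equal to 1. Then for every database DB : Fin n → R and every query index q : Fin n, ∑_{i ∈ Fin n} (∏_{j : (E i) j = 1} (E q) j) · DB i = DB q. -/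
/-! A constant-weight codeword `x` has the product `∏_{j : x j = 1} y j` equal to `1` when `y = x`.
When `y ≠ x` is another codeword of the same weight, the ones of `x` cannot all lie among the
ones of `y` (equal cardinalities would force equal supports, hence `x = y`), so some factor is
`y j = 0`. Injectivity of the encoding thus turns the selection vector into the indicator of `q`. -/

section ZeroOneVector

variable {ι R : Type*} [Fintype ι] [DecidableEq R]

theorem eq_of_filter_eq_one_eq [Zero R] [One R] {x y : ι → R}
    (hx : ∀ j, x j = 0 ∨ x j = 1) (hy : ∀ j, y j = 0 ∨ y j = 1)
    (h : Finset.univ.filter (fun j => x j = 1) = Finset.univ.filter (fun j => y j = 1)) :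
    x = y := by
  funext j
  have hj : x j = 1 ↔ y j = 1 := by simpa using Finset.ext_iff.mp h j
  by_cases h1 : x j = 1
  · rw [h1, hj.mp h1]
  · rw [(hx j).resolve_right h1, (hy j).resolve_right (mt hj.mpr h1)]

theorem prod_filter_eq_one_eq_ite [CommMonoidWithZero R] {x y : ι → R}
    (hx : ∀ j, x j = 0 ∨ x j = 1) (hy : ∀ j, y j = 0 ∨ y j = 1)
    (hcard : (Finset.univ.filter (fun j => x j = 1)).card =
      (Finset.univ.filter (fun j => y j = 1)).card) :
    ∏ j ∈ Finset.univ.filter (fun j => x j = 1), y j = if x = y then 1 else 0 := by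
  split_ifs with hxy
  · subst hxy
    exact Finset.prod_eq_one fun j hj => (Finset.mem_filter.mp hj).2
  · have hsub : ¬ Finset.univ.filter (fun j => x j = 1) ⊆ Finset.univ.filter (fun j => y j = 1) :=
      fun hsub => hxy (eq_of_filter_eq_one_eq hx hy
        (Finset.eq_of_subset_of_card_le hsub hcard.ge))
    obtain ⟨j, hxj, hyj⟩ := Finset.not_subset.mp hsub
    have hyj0 : y j = 0 := (hy j).resolve_right fun h => hyj (by simp [h])
    exact Finset.prod_eq_zero hxj hyj0

end ZeroOneVector

theorem constant_weight_pir_correct_general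
    {R : Type*} [CommRing R] [DecidableEq R]
    {n m k : ℕ} (E : Fin n → (Fin m → R)) (hE : Function.Injective E)
    (h01 : ∀ i j, E i j = 0 ∨ E i j = 1)
    (hwt : ∀ i, (Finset.univ.filter (fun j => E i j = 1)).card = k)
    (DB : Fin n → R) (q : Fin n) :
    (∑ i : Fin n, (∏ j ∈ Finset.univ.filter (fun j => E i j = 1), E q j) * DB i) = DB q := by
  have hselect : ∀ i, ∏ j ∈ Finset.univ.filter (fun j => E i j = 1), E q j =
      if i = q then 1 else 0 := fun i => by
    rw [prod_filter_eq_one_eq_ite (h01 i) (h01 q) (by rw [hwt, hwt])]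
    exact if_congr hE.eq_iff rfl rfl
  simp only [hselect, ite_mul, one_mul, zero_mul, Finset.sum_ite_eq', Finset.mem_univ, if_true]

/-- **Correctness of constant-weight PIR.** Let `R` be a nontrivial commutative ring and
`E : Fin n → (Fin m → R)` an injective encoding into constant-weight codewords (entries in
`{0,1}`, exactly `k` ones). Then for every database `DB : Fin n → R` and query `q`,
`∑ i, (∏_{j : (E i) j = 1} (E q) j) * DB i = DB q`. -/
theorem constant_weight_pir_correct
    {R : Type*} [CommRing R] [Nontrivial R] [DecidableEq R]
    {n m k : ℕ} (E : Fin n → (Fin m → R)) (hE : Function.Injective E)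
    (h01 : ∀ i j, E i j = 0 ∨ E i j = 1)
    (hwt : ∀ i, (Finset.univ.filter (fun j => E i j = 1)).card = k)
    (DB : Fin n → R) (q : Fin n) :
    (∑ i : Fin n, (∏ j ∈ Finset.univ.filter (fun j => E i j = 1), E q j) * DB i) = DB q :=
  constant_weight_pir_correct_general E hE h01 hwt DB q
end

section
/- Let R be a nontrivial commutative ring, S a type of identifiers, and E : S → (Fin m → R) an injective map such that for every s ∈ S the vector E s has all entries in {0,1} and exactly k entries equal to 1. Let ID be a finite set of identifiers (a Finset of S) and DB : S → R. Then for every query q ∈ S, ∑_{id ∈ ID} (∏_{j : (E id) j = 1} (E q) j) · DB id equals DB q if q ∈ ID, and equals 0 if q ∉ ID (correctness of constant-weight keyword PIR over a sparse database). -/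
/-!
A `0/1` vector is determined by the set of coordinates where it equals `1`. The product
`∏_{j : y j = 1} x j` of a `0/1` vector `x` is `1` exactly when the ones of `y` are among the
ones of `x`; if `y` has at least as many ones as `x`, this inclusion forces `x = y`. Hence for
an injective constant-weight encoding the product is the indicator of `id = q`, and the sum
over the database collapses to the term `id = q`.
-/

namespace ConstantWeight

variable {ι R : Type*} [Fintype ι] [CommMonoidWithZero R] [DecidableEq R]

def oneSet (x : ι → R) : Finset ι := Finset.univ.filter (fun j => x j = 1)

/-- The plain constant-weight equality operator `f_PCW(x, y)`. -/
def pcwEq (x y : ι → R) : R := ∏ j ∈ oneSet y, x j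

lemma mem_oneSet {x : ι → R} {j : ι} : j ∈ oneSet x ↔ x j = 1 := by
  simp [oneSet]

lemma eq_of_oneSet_eq {x y : ι → R} (hx : ∀ j, x j = 0 ∨ x j = 1)
    (hy : ∀ j, y j = 0 ∨ y j = 1) (h : oneSet x = oneSet y) : x = y := by
  funext j
  have hj : x j = 1 ↔ y j = 1 := by rw [← mem_oneSet, ← mem_oneSet, h]
  by_cases hyj : y j = 1
  · exact (hj.mpr hyj).trans hyj.symm
  · rw [(hy j).resolve_right hyj]
    exact (hx j).resolve_right (mt hj.mp hyj)

@[simp]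
lemma pcwEq_self (x : ι → R) : pcwEq x x = 1 :=
  Finset.prod_eq_one fun _ hj => mem_oneSet.mp hj

lemma pcwEq_eq_zero_of_ne {x y : ι → R} (hx : ∀ j, x j = 0 ∨ x j = 1)
    (hy : ∀ j, y j = 0 ∨ y j = 1) (hcard : (oneSet x).card ≤ (oneSet y).card)
    (hne : x ≠ y) : pcwEq x y = 0 := by
  have hnsub : ¬ oneSet y ⊆ oneSet x := fun hsub =>
    hne (eq_of_oneSet_eq hx hy (Finset.eq_of_subset_of_card_le hsub hcard).symm)
  obtain ⟨j, hjy, hjx⟩ := Finset.not_subset.mp hnsub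
  exact Finset.prod_eq_zero hjy ((hx j).resolve_right (mt mem_oneSet.mpr hjx))

end ConstantWeight

open ConstantWeight in
theorem constant_weight_keyword_pir_correct_general
    {R : Type*} [CommRing R] [DecidableEq R]
    {S : Type*} [DecidableEq S] {m k : ℕ} (E : S → (Fin m → R)) (hE : Function.Injective E)
    (h01 : ∀ s j, E s j = 0 ∨ E s j = 1)
    (hwt : ∀ s, (Finset.univ.filter (fun j => E s j = 1)).card = k)
    (ID : Finset S) (DB : S → R) (q : S) :
    (∑ id ∈ ID, (∏ j ∈ Finset.univ.filter (fun j => E id j = 1), E q j) * DB id) =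
      if q ∈ ID then DB q else 0 := by
  change ∑ id ∈ ID, pcwEq (E q) (E id) * DB id = _
  have hmismatch : ∀ id, id ≠ q → pcwEq (E q) (E id) * DB id = 0 := fun id hne => by
    rw [pcwEq_eq_zero_of_ne (h01 q) (h01 id) ((hwt q).trans (hwt id).symm).le
      (hE.ne (Ne.symm hne)), zero_mul]
  split_ifs with hq
  · rw [Finset.sum_eq_single_of_mem q hq fun id _ hne => hmismatch id hne, pcwEq_self, one_mul]
  · exact Finset.sum_eq_zero fun id hid => hmismatch id (ne_of_mem_of_not_mem hid hq)

/-- **Correctness of constant-weight keyword PIR over a sparse database.** Let `R` be a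
nontrivial commutative ring, `S` a type of identifiers, and `E : S → (Fin m → R)` an
injective encoding into constant-weight codewords (entries in `{0,1}`, exactly `k` ones).
Let `ID : Finset S` and `DB : S → R`. Then for every query `q : S`,
`∑_{id ∈ ID} (∏_{j : (E id) j = 1} (E q) j) * DB id` equals `DB q` if `q ∈ ID` and `0`
otherwise. -/
theorem constant_weight_keyword_pir_correct
    {R : Type*} [CommRing R] [Nontrivial R] [DecidableEq R]
    {S : Type*} [DecidableEq S] {m k : ℕ} (E : S → (Fin m → R)) (hE : Function.Injective E)
    (h01 : ∀ s j, E s j = 0 ∨ E s j = 1)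
    (hwt : ∀ s, (Finset.univ.filter (fun j => E s j = 1)).card = k)
    (ID : Finset S) (DB : S → R) (q : S) :
    (∑ id ∈ ID, (∏ j ∈ Finset.univ.filter (fun j => E id j = 1), E q j) * DB id) =
      if q ∈ ID then DB q else 0 :=
  constant_weight_keyword_pir_correct_general E hE h01 hwt ID DB q
end

section
/- Let R be a nontrivial commutative ring, and let E : Fin n → (Fin ℓ → R) be an injective map such that for every i the vector E i has all entries in {0,1}. Then for every database DB : Fin n → R and every query index q : Fin n, ∑_{i ∈ Fin n} ((∏_{j : (E i) j = 0} (1 − (E q) j)) · (∏_{j : (E i) j = 1} (E q) j)) · DB i = DB q (correctness of folklore PIR). -/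
open Finset

section FolkloreEquality

variable {R ι : Type*} [CommRing R] [DecidableEq R] [Fintype ι]

/-- The plain folklore equality operator `f_PF(x, y)`, with `x` the encoded query and `y` the
encoded row. -/
def folkloreEq (x y : ι → R) : R :=
  (∏ j ∈ univ.filter (fun j => y j = 0), (1 - x j)) * ∏ j ∈ univ.filter (fun j => y j = 1), x j

theorem folkloreEq_self (x : ι → R) : folkloreEq x x = 1 := by
  have hzeros : ∏ j ∈ univ.filter (fun j => x j = 0), (1 - x j) = 1 :=
    prod_eq_one fun j hj => by rw [(mem_filter.mp hj).2, sub_zero]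
  have hones : ∏ j ∈ univ.filter (fun j => x j = 1), x j = 1 :=
    prod_eq_one fun j hj => (mem_filter.mp hj).2
  rw [folkloreEq, hzeros, hones, one_mul]

/-- On Boolean vectors, a coordinate where `x` and `y` differ kills one of the two factors. -/
theorem folkloreEq_of_ne {x y : ι → R} (hx : ∀ j, x j = 0 ∨ x j = 1)
    (hy : ∀ j, y j = 0 ∨ y j = 1) (hne : x ≠ y) : folkloreEq x y = 0 := by
  obtain ⟨j, hj⟩ := Function.ne_iff.mp hne
  rcases hy j with hy0 | hy1
  · have hx1 : x j = 1 := (hx j).resolve_left (hy0 ▸ hj)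
    refine mul_eq_zero_of_left (prod_eq_zero (mem_filter.mpr ⟨mem_univ j, hy0⟩) ?_) _
    rw [hx1, sub_self]
  · have hx0 : x j = 0 := (hx j).resolve_right (hy1 ▸ hj)
    exact mul_eq_zero_of_right _ (prod_eq_zero (mem_filter.mpr ⟨mem_univ j, hy1⟩) hx0)

theorem folkloreEq_eq_ite {x y : ι → R} (hx : ∀ j, x j = 0 ∨ x j = 1)
    (hy : ∀ j, y j = 0 ∨ y j = 1) [Decidable (x = y)] :
    folkloreEq x y = if x = y then 1 else 0 := by
  split_ifs with h
  · rw [h, folkloreEq_self]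
  · exact folkloreEq_of_ne hx hy h

end FolkloreEquality

theorem folklore_pir_correct_general
    {R : Type*} [CommRing R] [DecidableEq R]
    {n ℓ : ℕ} (E : Fin n → (Fin ℓ → R)) (hE : Function.Injective E)
    (h01 : ∀ i j, E i j = 0 ∨ E i j = 1)
    (DB : Fin n → R) (q : Fin n) :
    (∑ i : Fin n,
        ((∏ j ∈ Finset.univ.filter (fun j => E i j = 0), (1 - E q j)) *
          (∏ j ∈ Finset.univ.filter (fun j => E i j = 1), E q j)) * DB i) = DB q := by
  change ∑ i, folkloreEq (E q) (E i) * DB i = DB q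
  have hselect : ∀ i, folkloreEq (E q) (E i) = if q = i then 1 else 0 := fun i => by
    rw [folkloreEq_eq_ite (h01 q) (h01 i)]
    exact if_congr hE.eq_iff rfl rfl
  simp only [hselect, ite_mul, one_mul, zero_mul, sum_ite_eq, mem_univ, if_true]

/-- **Correctness of folklore PIR.** Let `R` be a nontrivial commutative ring and
`E : Fin n → (Fin ℓ → R)` an injective encoding into Boolean vectors (entries in `{0,1}`).
Then for every database `DB : Fin n → R` and query `q`,
`∑ i, ((∏_{j : (E i) j = 0} (1 - (E q) j)) * (∏_{j : (E i) j = 1} (E q) j)) * DB i = DB q`. -/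
theorem folklore_pir_correct
    {R : Type*} [CommRing R] [Nontrivial R] [DecidableEq R]
    {n ℓ : ℕ} (E : Fin n → (Fin ℓ → R)) (hE : Function.Injective E)
    (h01 : ∀ i j, E i j = 0 ∨ E i j = 1)
    (DB : Fin n → R) (q : Fin n) :
    (∑ i : Fin n,
        ((∏ j ∈ Finset.univ.filter (fun j => E i j = 0), (1 - E q j)) *
          (∏ j ∈ Finset.univ.filter (fun j => E i j = 1), E q j)) * DB i) = DB q :=
  folklore_pir_correct_general E hE h01 DB q
end

section
/- Let k ≥ 1 and m ≥ k be natural numbers, and let x be a natural number with x < C(m,k). Let c be the largest natural number satisfying C(c,k) ≤ x (such c exists). Then c < m and x − C(c,k) < C(c, k−1). -/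
namespace Nat

theorem lt_of_choose_le_of_lt_choose {d m k x : ℕ} (hd : d.choose k ≤ x) (hx : x < m.choose k) :
    d < m := by
  by_contra! h
  exact (hd.trans_lt hx).not_ge (choose_le_choose k h)

theorem exists_isGreatest_choose_le {k m x : ℕ} (hk : 1 ≤ k) (hx : x < m.choose k) :
    ∃ c : ℕ, IsGreatest {d | d.choose k ≤ x} c :=
  BddAbove.exists_isGreatest_of_nonempty
    ⟨m, fun _ hd => (lt_of_choose_le_of_lt_choose hd hx).le⟩
    ⟨0, by simp [choose_eq_zero_of_lt hk]⟩

/-- By Pascal's rule `C(c+1,k) = C(c,k-1) + C(c,k)`. -/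
theorem sub_choose_lt_choose_pred {c k x : ℕ} (hk : 1 ≤ k) (hc : c.choose k ≤ x)
    (hx : x < (c + 1).choose k) : x - c.choose k < c.choose (k - 1) := by
  obtain ⟨j, rfl⟩ : ∃ j, k = j + 1 := ⟨k - 1, by omega⟩
  rw [choose_succ_succ'] at hx
  rw [add_tsub_cancel_right]
  omega

end Nat

theorem perfect_mapping_greedy_step_general (k m x : ℕ) (hk : 1 ≤ k)
    (hx : x < Nat.choose m k) :
    ∃ c : ℕ, (Nat.choose c k ≤ x ∧ ∀ d : ℕ, Nat.choose d k ≤ x → d ≤ c) ∧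
      c < m ∧ x - Nat.choose c k < Nat.choose c (k - 1) := by
  obtain ⟨c, hc, hmax⟩ := Nat.exists_isGreatest_choose_le hk hx
  have hsucc : x < (c + 1).choose k := by
    by_contra! h
    exact (hmax h).not_gt c.lt_succ_self
  exact ⟨c, ⟨hc, fun _ hd => hmax hd⟩, Nat.lt_of_choose_le_of_lt_choose hc hx,
    Nat.sub_choose_lt_choose_pred hk hc hsucc⟩

/-- **Greedy-choice property of the perfect mapping.** Let `k ≥ 1`, `m ≥ k`, and
`x < C(m,k)`. There exists a largest natural number `c` with `C(c,k) ≤ x`, and for it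
`c < m` and `x - C(c,k) < C(c, k-1)`. -/
theorem perfect_mapping_greedy_step (k m x : ℕ) (hk : 1 ≤ k) (hkm : k ≤ m)
    (hx : x < Nat.choose m k) :
    ∃ c : ℕ, (Nat.choose c k ≤ x ∧ ∀ d : ℕ, Nat.choose d k ≤ x → d ≤ c) ∧
      c < m ∧ x - Nat.choose c k < Nat.choose c (k - 1) :=
  perfect_mapping_greedy_step_general k m x hk hx
end

section
/- Let k ≥ 1 and let c_1 < c_2 < ... < c_k and d_1 < d_2 < ... < d_k be two strictly increasing sequences of natural numbers. Then ∑_{i=1}^{k} C(c_i, i) < ∑_{i=1}^{k} C(d_i, i) if and only if (c_1,...,c_k) strictly precedes (d_1,...,d_k) in colexicographic order (i.e., the sequences differ and at the largest index i where c_i ≠ d_i one has c_i < d_i). In particular, the perfect mapping preserves the order between the mapped elements. -/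
/-!
Read `(c_1, …, c_k)` as the cascade `∑ C(c_i, i)`. Since the `c_i` strictly increase, Pascal's
rule telescopes to `∑_{i ≤ j} C(c_i, i) < C(c_j + 1, j)`: a prefix of the cascade is outweighed
by a single increase of its top entry. Hence at the last index `j` where `c` and `d` differ,
`c_j < d_j` makes the `d`-cascade strictly larger, whatever happens below `j`. Colex being a
linear order, this strict monotonicity already gives the equivalence.
-/

open Finset

theorem sum_choose_lt_choose_succ_last {k : ℕ} {c : Fin (k + 1) → ℕ} (hc : StrictMono c) :
    ∑ i, (c i).choose (i + 1) < (c (Fin.last k) + 1).choose (k + 1) := by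
  induction k with
  | zero => simp
  | succ k ih =>
    have hlast : c (Fin.last k).castSucc + 1 ≤ c (Fin.last (k + 1)) :=
      hc (Fin.castSucc_lt_last _)
    rw [Fin.sum_univ_castSucc, Fin.val_last, Nat.choose_succ_succ' (c _)]
    gcongr ?_ + _
    calc ∑ i : Fin (k + 1), (c i.castSucc).choose (i + 1)
        < (c (Fin.last k).castSucc + 1).choose (k + 1) := ih (hc.comp Fin.strictMono_castSucc)
      _ ≤ (c (Fin.last (k + 1))).choose (k + 1) := Nat.choose_le_choose _ hlast

theorem sum_choose_lt_sum_choose_of_toColex_lt {k : ℕ} {c d : Fin k → ℕ} (hc : StrictMono c)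
    (h : toColex c < toColex d) :
    ∑ i, (c i).choose (i + 1) < ∑ i, (d i).choose (i + 1) := by
  induction k with
  | zero => obtain ⟨j, -⟩ := h; exact j.elim0
  | succ k ih =>
    obtain ⟨j, h_eq_above, h_lt⟩ := h
    rcases Fin.eq_castSucc_or_eq_last j with ⟨j, rfl⟩ | rfl
    · have h_eq_last : c (Fin.last k) = d (Fin.last k) :=
        h_eq_above _ (Fin.castSucc_lt_last j)
      have h_init : toColex (c ∘ Fin.castSucc) < toColex (d ∘ Fin.castSucc) :=
        ⟨j, fun i hi => h_eq_above _ (Fin.castSucc_lt_castSucc_iff.2 hi), h_lt⟩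
      rw [Fin.sum_univ_castSucc, Fin.sum_univ_castSucc, h_eq_last]
      gcongr ?_ + _
      exact ih (hc.comp Fin.strictMono_castSucc) h_init
    · calc ∑ i, (c i).choose (i + 1)
          < (c (Fin.last k) + 1).choose (k + 1) := sum_choose_lt_choose_succ_last hc
        _ ≤ (d (Fin.last k)).choose (k + 1) := Nat.choose_le_choose _ h_lt
        _ ≤ ∑ i, (d i).choose (i + 1) :=
          single_le_sum (f := fun i : Fin (k + 1) => (d i).choose (i + 1))
            (fun _ _ => Nat.zero_le _) (mem_univ _)

theorem sum_choose_lt_sum_choose_iff_toColex_lt {k : ℕ} {c d : Fin k → ℕ} (hc : StrictMono c)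
    (hd : StrictMono d) :
    ∑ i, (c i).choose (i + 1) < ∑ i, (d i).choose (i + 1) ↔ toColex c < toColex d := by
  refine ⟨fun h => ?_, sum_choose_lt_sum_choose_of_toColex_lt hc⟩
  rcases lt_trichotomy (toColex c) (toColex d) with hlt | heq | hgt
  · exact hlt
  · cases toColex.injective heq
    exact absurd h (lt_irrefl _)
  · exact absurd h (sum_choose_lt_sum_choose_of_toColex_lt hd hgt).not_gt

theorem perfect_mapping_colex_order_general (k : ℕ) (c d : Fin k → ℕ)
    (hc : StrictMono c) (hd : StrictMono d) :
    ((∑ i : Fin k, Nat.choose (c i) (i.val + 1)) <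
        ∑ i : Fin k, Nat.choose (d i) (i.val + 1)) ↔
      ∃ j : Fin k, c j < d j ∧ ∀ i : Fin k, j < i → c i = d i :=
  (sum_choose_lt_sum_choose_iff_toColex_lt hc hd).trans <| exists_congr fun _ => and_comm

/-- **The perfect mapping is order preserving (colexicographic order).** Let `k ≥ 1` and
`c, d : Fin k → ℕ` strictly increasing. Then `∑_i C(c_i, i) < ∑_i C(d_i, i)` iff
`c` strictly precedes `d` in colexicographic order, i.e. there is an index `j` with
`c j < d j` and `c i = d i` for all `i > j`. -/
theorem perfect_mapping_colex_order (k : ℕ) (hk : 1 ≤ k) (c d : Fin k → ℕ)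
    (hc : StrictMono c) (hd : StrictMono d) :
    ((∑ i : Fin k, Nat.choose (c i) (i.val + 1)) <
        ∑ i : Fin k, Nat.choose (d i) (i.val + 1)) ↔
      ∃ j : Fin k, c j < d j ∧ ∀ i : Fin k, j < i → c i = d i :=
  perfect_mapping_colex_order_general k c d hc hd
end

section
/- Let t ≥ 2, let N be a power of two, and let 0 ≤ a with 2^{a+1} dividing N. Set s = N/2^a + 1 (an odd number) and let σ_s be the ring endomorphism of R = (ZMod t)[X]/(X^N + 1) induced by X ↦ X^s. Then for every p ∈ R, σ_s(X^{2^a} · p) = − X^{2^a} · σ_s(p). -/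
open Polynomial

namespace Polynomial

variable {R : Type*} [CommRing R] {N : ℕ}

theorem mk_X_pow_eq_neg_one :
    Ideal.Quotient.mk (Ideal.span {(X ^ N + 1 : R[X])}) (X ^ N) = -1 := by
  have h : Ideal.Quotient.mk (Ideal.span {(X ^ N + 1 : R[X])}) (X ^ N + 1) = 0 :=
    Ideal.Quotient.eq_zero_iff_mem.mpr (Ideal.mem_span_singleton_self _)
  rw [map_add, map_one] at h
  exact eq_neg_of_add_eq_zero_left h

theorem mk_aeval_X_pow_div_add_one_X_pow {m : ℕ} (hm : m ∣ N) :
    Ideal.Quotient.mk (Ideal.span {(X ^ N + 1 : R[X])})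
        (aeval (X ^ (N / m + 1) : R[X]) (X ^ m : R[X])) =
      -Ideal.Quotient.mk (Ideal.span {(X ^ N + 1 : R[X])}) (X ^ m) := by
  have hexp : (N / m + 1) * m = N + m := by rw [Nat.add_mul, Nat.div_mul_cancel hm, one_mul]
  rw [map_pow, aeval_X, ← pow_mul, hexp, pow_add, map_mul, mk_X_pow_eq_neg_one]
  ring

theorem map_mk_X_pow_mul_of_dvd {m : ℕ} (hm : m ∣ N)
    (σ : R[X] ⧸ Ideal.span {(X ^ N + 1 : R[X])} →+* R[X] ⧸ Ideal.span {(X ^ N + 1 : R[X])})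
    (hσ : ∀ p : R[X], σ (Ideal.Quotient.mk _ p) =
      Ideal.Quotient.mk _ (aeval (X ^ (N / m + 1) : R[X]) p))
    (q : R[X] ⧸ Ideal.span {(X ^ N + 1 : R[X])}) :
    σ (Ideal.Quotient.mk _ (X ^ m) * q) = -(Ideal.Quotient.mk _ (X ^ m) * σ q) := by
  rw [map_mul, hσ, mk_aeval_X_pow_div_add_one_X_pow hm]
  ring

end Polynomial

theorem substitution_monomial_shift_general (t N a : ℕ)
    (ha : 2 ^ (a + 1) ∣ N)
    (σ : ((ZMod t)[X] ⧸ Ideal.span {(X ^ N + 1 : (ZMod t)[X])}) →+*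
      ((ZMod t)[X] ⧸ Ideal.span {(X ^ N + 1 : (ZMod t)[X])}))
    (hσ : ∀ p : (ZMod t)[X],
      σ (Ideal.Quotient.mk (Ideal.span {(X ^ N + 1 : (ZMod t)[X])}) p) =
        Ideal.Quotient.mk (Ideal.span {(X ^ N + 1 : (ZMod t)[X])})
          (Polynomial.aeval (X ^ (N / 2 ^ a + 1) : (ZMod t)[X]) p)) :
    ∀ q : ((ZMod t)[X] ⧸ Ideal.span {(X ^ N + 1 : (ZMod t)[X])}),
      σ (Ideal.Quotient.mk (Ideal.span {(X ^ N + 1 : (ZMod t)[X])}) (X ^ (2 ^ a)) * q) =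
        - (Ideal.Quotient.mk (Ideal.span {(X ^ N + 1 : (ZMod t)[X])}) (X ^ (2 ^ a)) * σ q) :=
  map_mk_X_pow_mul_of_dvd ((pow_dvd_pow 2 a.le_succ).trans ha) σ hσ

/-- **Key identity for the modified oblivious expansion.** Let `t ≥ 2`, `N` a power of two,
`2^(a+1) ∣ N`, `s = N/2^a + 1`, and `σ_s` the substitution endomorphism `X ↦ X^s` of
`R = (ZMod t)[X]/(X^N + 1)`. Then `σ_s (X^(2^a) * p) = - X^(2^a) * σ_s p` for all `p ∈ R`. -/
theorem substitution_monomial_shift (t N a : ℕ) (ht : 2 ≤ t)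
    (hN : ∃ e : ℕ, N = 2 ^ e) (ha : 2 ^ (a + 1) ∣ N)
    (σ : ((ZMod t)[X] ⧸ Ideal.span {(X ^ N + 1 : (ZMod t)[X])}) →+*
      ((ZMod t)[X] ⧸ Ideal.span {(X ^ N + 1 : (ZMod t)[X])}))
    (hσ : ∀ p : (ZMod t)[X],
      σ (Ideal.Quotient.mk (Ideal.span {(X ^ N + 1 : (ZMod t)[X])}) p) =
        Ideal.Quotient.mk (Ideal.span {(X ^ N + 1 : (ZMod t)[X])})
          (Polynomial.aeval (X ^ (N / 2 ^ a + 1) : (ZMod t)[X]) p)) :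
    ∀ q : ((ZMod t)[X] ⧸ Ideal.span {(X ^ N + 1 : (ZMod t)[X])}),
      σ (Ideal.Quotient.mk (Ideal.span {(X ^ N + 1 : (ZMod t)[X])}) (X ^ (2 ^ a)) * q) =
        - (Ideal.Quotient.mk (Ideal.span {(X ^ N + 1 : (ZMod t)[X])}) (X ^ (2 ^ a)) * σ q) :=
  substitution_monomial_shift_general t N a ha σ hσ
end

section
/- Let t ≥ 2, let N be a power of two, let 0 ≤ a with 2^{a+1} dividing N, set s = N/2^a + 1, and let σ_s be the ring endomorphism of R = (ZMod t)[X]/(X^N + 1) induced by X ↦ X^s. Then for every natural number j < N: if 2^{a+1} divides j then σ_s(X^j) = X^j, and if j ≡ 2^a (mod 2^{a+1}) then σ_s(X^j) = − X^j. -/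
open Polynomial

section NegacyclicSubstitution

variable {S : Type*} [CommRing S] {N d : ℕ} {ξ : S}

/-- The exponent `(N / d + 1) * (d * k)` exceeds `d * k` by `N * k`, and `ξ ^ N = -1`. -/
theorem pow_div_add_one_pow_mul_eq (hξ : ξ ^ N = -1) (hd : d ∣ N) (k : ℕ) :
    (ξ ^ (N / d + 1)) ^ (d * k) = (-1) ^ k * ξ ^ (d * k) := by
  have hexp : (N / d + 1) * (d * k) = N * k + d * k := by
    rw [add_mul, one_mul, ← mul_assoc, Nat.div_mul_cancel hd]
  rw [← pow_mul, hexp, pow_add, pow_mul, hξ]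

theorem pow_div_add_one_pow_of_two_mul_dvd (hξ : ξ ^ N = -1) (hd : d ∣ N) {j : ℕ}
    (hj : 2 * d ∣ j) : (ξ ^ (N / d + 1)) ^ j = ξ ^ j := by
  obtain ⟨m, rfl⟩ := hj
  rw [mul_comm 2, mul_assoc, pow_div_add_one_pow_mul_eq hξ hd, (even_two_mul m).neg_one_pow,
    one_mul]

theorem pow_div_add_one_pow_of_mod_two_mul_eq (hξ : ξ ^ N = -1) (hd : d ∣ N) {j : ℕ}
    (hj : j % (2 * d) = d) : (ξ ^ (N / d + 1)) ^ j = -ξ ^ j := by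
  obtain ⟨q, rfl⟩ : ∃ q, j = d * (2 * q + 1) := ⟨j / (2 * d), by
    conv_lhs => rw [← Nat.div_add_mod j (2 * d), hj]
    ring⟩
  rw [pow_div_add_one_pow_mul_eq hξ hd, (odd_two_mul_add_one q).neg_one_pow, neg_one_mul]

end NegacyclicSubstitution

theorem Polynomial.quotient_mk_X_pow_eq_neg_one {R : Type*} [CommRing R] (N : ℕ) :
    Ideal.Quotient.mk (Ideal.span {(X ^ N + 1 : R[X])}) X ^ N = -1 := by
  have h : Ideal.Quotient.mk (Ideal.span {(X ^ N + 1 : R[X])}) (X ^ N + 1) = 0 :=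
    Ideal.Quotient.eq_zero_iff_mem.mpr (Ideal.subset_span rfl)
  rw [map_add, map_one, map_pow] at h
  exact eq_neg_of_add_eq_zero_left h

theorem substitution_action_on_monomials_general (t N a : ℕ)
    (ha : 2 ^ (a + 1) ∣ N)
    (σ : ((ZMod t)[X] ⧸ Ideal.span {(X ^ N + 1 : (ZMod t)[X])}) →+*
      ((ZMod t)[X] ⧸ Ideal.span {(X ^ N + 1 : (ZMod t)[X])}))
    (hσ : ∀ p : (ZMod t)[X],
      σ (Ideal.Quotient.mk (Ideal.span {(X ^ N + 1 : (ZMod t)[X])}) p) =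
        Ideal.Quotient.mk (Ideal.span {(X ^ N + 1 : (ZMod t)[X])})
          (Polynomial.aeval (X ^ (N / 2 ^ a + 1) : (ZMod t)[X]) p)) :
    ∀ j : ℕ, j < N →
      (2 ^ (a + 1) ∣ j →
        σ (Ideal.Quotient.mk (Ideal.span {(X ^ N + 1 : (ZMod t)[X])}) (X ^ j)) =
          Ideal.Quotient.mk (Ideal.span {(X ^ N + 1 : (ZMod t)[X])}) (X ^ j)) ∧
      (j % 2 ^ (a + 1) = 2 ^ a →
        σ (Ideal.Quotient.mk (Ideal.span {(X ^ N + 1 : (ZMod t)[X])}) (X ^ j)) =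
          - Ideal.Quotient.mk (Ideal.span {(X ^ N + 1 : (ZMod t)[X])}) (X ^ j)) := by
  intro j _
  have hσX : σ (Ideal.Quotient.mk (Ideal.span {(X ^ N + 1 : (ZMod t)[X])}) X) =
      Ideal.Quotient.mk (Ideal.span {(X ^ N + 1 : (ZMod t)[X])}) X ^ (N / 2 ^ a + 1) := by
    rw [hσ, aeval_X, map_pow]
  have hd : 2 ^ a ∣ N := (pow_dvd_pow 2 a.le_succ).trans ha
  rw [map_pow, map_pow, hσX, pow_succ']
  exact ⟨pow_div_add_one_pow_of_two_mul_dvd (quotient_mk_X_pow_eq_neg_one N) hd,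
    pow_div_add_one_pow_of_mod_two_mul_eq (quotient_mk_X_pow_eq_neg_one N) hd⟩

/-- **Action of substitution on monomials.** Let `t ≥ 2`, `N` a power of two,
`2^(a+1) ∣ N`, `s = N/2^a + 1`, and `σ_s` the substitution endomorphism `X ↦ X^s` of
`R = (ZMod t)[X]/(X^N + 1)`. For every `j < N`: if `2^(a+1) ∣ j` then `σ_s(X^j) = X^j`,
and if `j ≡ 2^a (mod 2^(a+1))` then `σ_s(X^j) = -X^j`. -/
theorem substitution_action_on_monomials (t N a : ℕ) (ht : 2 ≤ t)
    (hN : ∃ e : ℕ, N = 2 ^ e) (ha : 2 ^ (a + 1) ∣ N)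
    (σ : ((ZMod t)[X] ⧸ Ideal.span {(X ^ N + 1 : (ZMod t)[X])}) →+*
      ((ZMod t)[X] ⧸ Ideal.span {(X ^ N + 1 : (ZMod t)[X])}))
    (hσ : ∀ p : (ZMod t)[X],
      σ (Ideal.Quotient.mk (Ideal.span {(X ^ N + 1 : (ZMod t)[X])}) p) =
        Ideal.Quotient.mk (Ideal.span {(X ^ N + 1 : (ZMod t)[X])})
          (Polynomial.aeval (X ^ (N / 2 ^ a + 1) : (ZMod t)[X]) p)) :
    ∀ j : ℕ, j < N →
      (2 ^ (a + 1) ∣ j →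
        σ (Ideal.Quotient.mk (Ideal.span {(X ^ N + 1 : (ZMod t)[X])}) (X ^ j)) =
          Ideal.Quotient.mk (Ideal.span {(X ^ N + 1 : (ZMod t)[X])}) (X ^ j)) ∧
      (j % 2 ^ (a + 1) = 2 ^ a →
        σ (Ideal.Quotient.mk (Ideal.span {(X ^ N + 1 : (ZMod t)[X])}) (X ^ j)) =
          - Ideal.Quotient.mk (Ideal.span {(X ^ N + 1 : (ZMod t)[X])}) (X ^ j)) :=
  substitution_action_on_monomials_general t N a ha σ hσ
end

section
/- Let m ≥ 1 and 1 ≤ k ≤ m. Let Ω = ℕ → Fin m be equipped with the infinite product of the uniform probability measure on Fin m (an i.i.d. uniform sequence). Almost surely the sequence ω attains at least k distinct values; let S(ω) be the set of the first k pairwise-distinct values of ω (the set of values that have appeared by the first time at which k distinct values have occurred). Then for every k-element subset c of Fin m, the probability that S(ω) = c equals 1 / C(m,k); i.e., S is uniformly distributed over the k-element subsets of Fin m. -/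
/-! Matching the cylinder probabilities identifies `μ` with the infinite product of uniform
measures on `Fin m`. Under it, each fixed value is missed forever with probability zero, so
almost surely every value, hence at least `k ≤ m` distinct values, appears. The product
measure is invariant under `ω ↦ σ ∘ ω` for every permutation `σ` of `Fin m`, and this map
sends the event `firstDistinct k ω = c` onto `firstDistinct k ω = σ '' c`. Permutations act
transitively on `k`-subsets, so the `C(m,k)` events `firstDistinct k ω = c` have equal
probabilities, and they partition an almost sure event. -/

open MeasureTheory ENNReal

/-- The set of the first `k` pairwise-distinct values of the sequence `ω`: the image of `ω`
on the first time interval at which `k` distinct values have occurred (junk value `∅` if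
`k` distinct values never occur). -/
noncomputable def firstDistinct {m : ℕ} (k : ℕ) (ω : ℕ → Fin m) : Finset (Fin m) :=
  haveI := Classical.propDecidable (∃ n, k ≤ ((Finset.range n).image ω).card)
  if h : ∃ n, k ≤ ((Finset.range n).image ω).card then
    (Finset.range (Nat.find h)).image ω
  else ∅

open ProbabilityTheory Finset Measure

theorem Function.Surjective.exists_image_range_eq_univ {α : Type*} [Fintype α]
    [DecidableEq α] {ω : ℕ → α} (hω : Function.Surjective ω) :
    ∃ n, (range n).image ω = univ := by
  obtain ⟨n, hn⟩ := exists_nat_subset_range (univ.image (Function.surjInv hω))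
  exact ⟨n, eq_univ_of_forall fun a => mem_image.2
    ⟨_, hn (mem_image_of_mem _ (mem_univ a)), Function.surjInv_eq hω a⟩⟩

theorem Finset.exists_perm_image_eq {α : Type*} [Fintype α] [DecidableEq α] {s t : Finset α}
    (h : s.card = t.card) : ∃ σ : Equiv.Perm α, s.image σ = t := by
  let e : s ≃ t := Fintype.equivOfCardEq (by rw [Fintype.card_coe, Fintype.card_coe, h])
  refine ⟨e.extendSubtype, eq_of_subset_of_card_le ?_ ?_⟩
  · intro b hb
    obtain ⟨a, ha, rfl⟩ := mem_image.1 hb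
    exact e.extendSubtype_mem a ha
  · rw [card_image_of_injective _ e.extendSubtype.injective, h]

section ProductMeasure

variable {ι : Type*} {X : ι → Type*} [∀ i, MeasurableSpace (X i)]

theorem measurableSet_of_dependsOn [∀ i, Countable (X i)] [∀ i, MeasurableSingletonClass (X i)]
    {S : Set (∀ i, X i)} (s : Finset ι) (hS : DependsOn (· ∈ S) s) : MeasurableSet S := by
  have hS_eq : S = s.restrict ⁻¹' (s.restrict '' S) := by
    refine (Set.subset_preimage_image _ _).antisymm ?_
    rintro y ⟨x, hx, hxy⟩
    have : (x ∈ S) = (y ∈ S) := hS fun i hi => congrFun hxy ⟨i, hi⟩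
    exact this ▸ hx
  rw [hS_eq]
  exact measurable_restrict s (Set.to_countable _).measurableSet

theorem eq_infinitePi_of_cylinder_singleton [∀ i, Countable (X i)]
    [∀ i, MeasurableSingletonClass (X i)] [∀ i, Nonempty (X i)]
    (μ : ∀ i, Measure (X i)) [∀ i, IsProbabilityMeasure (μ i)] {ν : Measure (∀ i, X i)}
    (hν : ∀ (s : Finset ι) (f : ∀ i, X i),
      ν {x | ∀ i ∈ s, x i = f i} = ∏ i ∈ s, μ i {f i}) :
    ν = infinitePi μ := by
  classical
  refine IsProjectiveLimit.unique (fun s => ?_) (isProjectiveLimit_infinitePi μ)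
  refine ext_of_singleton fun g => ?_
  let f : ∀ i, X i := fun i => if h : i ∈ s then g ⟨i, h⟩ else Classical.arbitrary _
  have hpre : s.restrict ⁻¹' {g} = {x | ∀ i ∈ s, x i = f i} := by
    ext x
    simp +contextual [f, funext_iff]
  rw [map_apply (measurable_restrict s) (measurableSet_singleton g), hpre, hν,
    pi_singleton, ← prod_attach s, univ_eq_attach]
  exact prod_congr rfl fun i _ => by simp [f]

theorem infinitePi_const_pi_univ_eq_zero {α : Type*} [MeasurableSpace α] (ν : Measure α)
    [IsProbabilityMeasure ν] {t : Set α} (ht : MeasurableSet t) (hνt : ν t < 1) :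
    infinitePi (fun _ : ℕ => ν) (Set.univ.pi fun _ => t) = 0 := by
  have hbound : ∀ n, infinitePi (fun _ : ℕ => ν) (Set.univ.pi fun _ => t) ≤ ν t ^ n := by
    intro n
    calc infinitePi (fun _ : ℕ => ν) (Set.univ.pi fun _ => t)
        ≤ infinitePi (fun _ : ℕ => ν) ((range n : Set ℕ).pi fun _ => t) :=
          measure_mono (Set.pi_mono' (fun _ _ => le_rfl) (Set.subset_univ _))
      _ = ν t ^ n := by
          rw [infinitePi_pi _ fun _ _ => ht, prod_const, card_range]
  exact le_antisymm (ge_of_tendsto' (ENNReal.tendsto_pow_atTop_nhds_zero_of_lt_one hνt) hbound)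
    zero_le

end ProductMeasure

theorem map_uniformOn_univ_perm {α : Type*} [Fintype α] [MeasurableSpace α]
    [MeasurableSingletonClass α] (σ : Equiv.Perm α) :
    (uniformOn (Set.univ : Set α)).map σ = uniformOn Set.univ := by
  refine ext_of_singleton fun a => ?_
  rw [map_apply (measurable_of_finite σ) (measurableSet_singleton a)]
  simp [uniformOn_univ, ← Equiv.image_symm_eq_preimage]

section FirstDistinct

variable {m k : ℕ}

theorem card_firstDistinct {ω : ℕ → Fin m} (h : ∃ n, k ≤ ((range n).image ω).card) :
    (firstDistinct k ω).card = k := by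
  rw [firstDistinct, dif_pos h]
  refine le_antisymm ?_ (Nat.find_spec h)
  rcases hfind : Nat.find h with _ | N
  · simp
  · have hN : ((range N).image ω).card < k := not_le.1 (Nat.find_min h (by omega))
    rw [range_add_one, image_insert]
    exact (card_insert_le _ _).trans (by omega)

theorem firstDistinct_eq_iff {ω : ℕ → Fin m} {c : Finset (Fin m)} (hc : c.card = k) :
    firstDistinct k ω = c ↔ ∃ n, (range n).image ω = c := by
  constructor
  · intro hω
    by_cases h : ∃ n, k ≤ ((range n).image ω).card
    · rw [firstDistinct, dif_pos h] at hω
      exact ⟨_, hω⟩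
    · rw [firstDistinct, dif_neg h] at hω
      exact ⟨0, by simp [← hω]⟩
  · rintro ⟨n, hn⟩
    have h : ∃ n, k ≤ ((range n).image ω).card := ⟨n, by rw [hn, hc]⟩
    refine eq_of_subset_of_card_le ?_ (by rw [card_firstDistinct h, hc])
    rw [firstDistinct, dif_pos h, ← hn]
    exact image_subset_image (range_subset_range.2 (Nat.find_min' h (by rw [hn, hc])))

theorem firstDistinct_comp_eq_image_iff (σ : Equiv.Perm (Fin m)) {ω : ℕ → Fin m}
    {c : Finset (Fin m)} (hc : c.card = k) :
    firstDistinct k (σ ∘ ω) = c.image σ ↔ firstDistinct k ω = c := by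
  rw [firstDistinct_eq_iff (by rwa [card_image_of_injective _ σ.injective]),
    firstDistinct_eq_iff hc]
  simp only [← image_image, (image_injective σ.injective).eq_iff]

theorem measurableSet_firstDistinct_eq {c : Finset (Fin m)} (hc : c.card = k) :
    MeasurableSet {ω : ℕ → Fin m | firstDistinct k ω = c} := by
  simp_rw [firstDistinct_eq_iff hc, Set.ofPred_exists]
  refine MeasurableSet.iUnion fun n => measurableSet_of_dependsOn (range n) fun x y hxy => ?_
  change ((range n).image x = c) = ((range n).image y = c)
  rw [image_congr hxy]

theorem setOf_exists_le_card_eq_biUnion :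
    {ω : ℕ → Fin m | ∃ n, k ≤ ((range n).image ω).card} =
      ⋃ c ∈ powersetCard k univ, {ω | firstDistinct k ω = c} := by
  ext ω
  simp only [Set.mem_ofPred_eq, Set.mem_iUnion, mem_powersetCard, exists_prop]
  constructor
  · intro h
    exact ⟨_, ⟨subset_univ _, card_firstDistinct h⟩, rfl⟩
  · rintro ⟨c, ⟨-, hc⟩, hω⟩
    obtain ⟨n, hn⟩ := (firstDistinct_eq_iff hc).1 hω
    exact ⟨n, by rw [hn, hc]⟩

end FirstDistinct

section UniformSequence

variable {m k : ℕ} [NeZero m]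

theorem infinitePi_uniformOn_exists_le_card_image_range (hkm : k ≤ m) :
    infinitePi (fun _ : ℕ => uniformOn (Set.univ : Set (Fin m)))
      {ω | ∃ n, k ≤ ((range n).image ω).card} = 1 := by
  set μ := infinitePi fun _ : ℕ => uniformOn (Set.univ : Set (Fin m))
  have hmiss : ∀ a : Fin m, μ (Set.univ.pi fun _ => {a}ᶜ) = 0 := fun a =>
    infinitePi_const_pi_univ_eq_zero _ (measurableSet_singleton a).compl <| by
      rw [prob_compl_eq_one_sub (measurableSet_singleton a)]
      exact ENNReal.sub_lt_self one_ne_top one_ne_zero (by simp [uniformOn_univ])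
  have hsurj : (⋃ a : Fin m, Set.univ.pi fun _ => {a}ᶜ)ᶜ ⊆
      {ω | ∃ n, k ≤ ((range n).image ω).card} := by
    intro ω hω
    have hω_surj : Function.Surjective ω := by simpa [Function.Surjective] using hω
    obtain ⟨n, hn⟩ := hω_surj.exists_image_range_eq_univ
    exact ⟨n, by rwa [hn, card_univ, Fintype.card_fin]⟩
  have hnull : μ {ω | ∃ n, k ≤ ((range n).image ω).card}ᶜ = 0 :=
    measure_mono_null (Set.compl_subset_comm.1 hsurj) (measure_iUnion_null hmiss)
  rw [measure_congr (ae_eq_univ.2 hnull), measure_univ]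

theorem infinitePi_uniformOn_firstDistinct_eq_of_card_eq {c c' : Finset (Fin m)}
    (hc : c.card = k) (hc' : c'.card = k) :
    infinitePi (fun _ : ℕ => uniformOn (Set.univ : Set (Fin m))) {ω | firstDistinct k ω = c} =
      infinitePi (fun _ : ℕ => uniformOn (Set.univ : Set (Fin m)))
        {ω | firstDistinct k ω = c'} := by
  set μ := infinitePi fun _ : ℕ => uniformOn (Set.univ : Set (Fin m))
  obtain ⟨σ, rfl⟩ := exists_perm_image_eq (hc.trans hc'.symm)
  have hσ : Measurable fun (ω : ℕ → Fin m) i => σ (ω i) :=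
    measurable_pi_lambda _ fun i => (measurable_of_finite σ).comp (measurable_pi_apply i)
  have hinv : μ.map (fun ω i => σ (ω i)) = μ := by
    simp only [μ, infinitePi_map_pi _ fun _ => measurable_of_finite σ, map_uniformOn_univ_perm]
  calc μ {ω | firstDistinct k ω = c}
      = μ ((fun ω i => σ (ω i)) ⁻¹' {ω | firstDistinct k ω = c.image σ}) := by
        congr 1
        ext ω
        exact (firstDistinct_comp_eq_image_iff σ hc).symm
    _ = μ {ω | firstDistinct k ω = c.image σ} := by
        rw [← map_apply hσ (measurableSet_firstDistinct_eq hc'), hinv]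

theorem infinitePi_uniformOn_firstDistinct_eq (hkm : k ≤ m) {c : Finset (Fin m)}
    (hc : c.card = k) :
    infinitePi (fun _ : ℕ => uniformOn (Set.univ : Set (Fin m))) {ω | firstDistinct k ω = c} =
      1 / (m.choose k : ℝ≥0∞) := by
  set μ := infinitePi fun _ : ℕ => uniformOn (Set.univ : Set (Fin m))
  have hsum : ∑ c' ∈ powersetCard k univ, μ {ω | firstDistinct k ω = c'} = 1 := by
    rw [← measure_biUnion_finset ?_ fun c' hc' =>
        measurableSet_firstDistinct_eq (mem_powersetCard.1 hc').2,
      ← setOf_exists_le_card_eq_biUnion, infinitePi_uniformOn_exists_le_card_image_range hkm]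
    exact fun c₁ _ c₂ _ hne =>
      Set.disjoint_left.2 fun ω h₁ h₂ => hne (h₁.symm.trans h₂)
  rw [sum_congr rfl fun c' hc' =>
      infinitePi_uniformOn_firstDistinct_eq_of_card_eq (mem_powersetCard.1 hc').2 hc,
    sum_const, card_powersetCard, card_univ, Fintype.card_fin, nsmul_eq_mul] at hsum
  rw [ENNReal.eq_div_iff (by simpa using Nat.choose_pos hkm |>.ne') (natCast_ne_top _), hsum]

end UniformSequence

theorem lossy_mapping_uniform_general {m k : ℕ} (hm : 1 ≤ m) (hkm : k ≤ m)
    (μ : Measure (ℕ → Fin m))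
    (hiid : ∀ (s : Finset ℕ) (f : ℕ → Fin m),
      μ {ω | ∀ i ∈ s, ω i = f i} = (1 / (m : ℝ≥0∞)) ^ s.card) :
    μ {ω | ∃ n, k ≤ ((Finset.range n).image ω).card} = 1 ∧
    ∀ c : Finset (Fin m), c.card = k →
      μ {ω | firstDistinct k ω = c} = 1 / (Nat.choose m k : ℝ≥0∞) := by
  have : NeZero m := ⟨by omega⟩
  obtain rfl : μ = infinitePi fun _ => uniformOn Set.univ :=
    eq_infinitePi_of_cylinder_singleton _ fun s f => by simp [hiid, uniformOn_univ]
  exact ⟨infinitePi_uniformOn_exists_le_card_image_range hkm,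
    fun c hc => infinitePi_uniformOn_firstDistinct_eq hkm hc⟩

/-- **Distribution of the lossy mapping.** Let `1 ≤ k ≤ m` and let `μ` be the infinite
product of the uniform probability measure on `Fin m` (characterized on cylinder sets:
the probability that the coordinates in a finite set `s` take prescribed values is
`(1/m)^|s|`). Then almost surely the sequence attains at least `k` distinct values, and
for every `k`-element subset `c` of `Fin m`, the probability that the set of the first `k`
pairwise-distinct values equals `c` is exactly `1 / C(m,k)`. -/
theorem lossy_mapping_uniform {m k : ℕ} (hm : 1 ≤ m) (hk : 1 ≤ k) (hkm : k ≤ m)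
    (μ : Measure (ℕ → Fin m)) [IsProbabilityMeasure μ]
    (hiid : ∀ (s : Finset ℕ) (f : ℕ → Fin m),
      μ {ω | ∀ i ∈ s, ω i = f i} = (1 / (m : ℝ≥0∞)) ^ s.card) :
    μ {ω | ∃ n, k ≤ ((Finset.range n).image ω).card} = 1 ∧
    ∀ c : Finset (Fin m), c.card = k →
      μ {ω | firstDistinct k ω = c} = 1 / (Nat.choose m k : ℝ≥0∞) :=
  lossy_mapping_uniform_general hm hkm μ hiid
end

section
/- Let m ≥ 1 and 1 ≤ k ≤ m. Let Ω = (ℕ → Fin m) × (ℕ → Fin m) be equipped with the product of two copies of the infinite product of the uniform probability measure on Fin m (two independent i.i.d. uniform sequences). For a sequence ω, let S(ω) be the set of its first k pairwise-distinct values (defined almost surely). Then the probability that S of the first sequence equals S of the second sequence is exactly 1 / C(m,k). (Equivalently: for distinct inputs x ≠ y, the lossy mapping with uniformly random hash functions maps x and y to the same constant-weight codeword with probability 1/C(m,k).) -/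
open MeasureTheory ENNReal

/-!
If `n` is the time at which the `k`-th distinct value of `ω` appears, the event
`firstDistinct k ω = S` is the disjoint union over `n` of cylinder events on the first `n`
values. The cylinder hypothesis therefore makes the two coordinates independent with the same
law `p S`, given by counting those prefixes. Permuting `Fin m` permutes the prefixes, so
`p S` only depends on `S.card`; and almost surely `k` distinct values do appear, because `n`
values fall into `k - 1` values with probability at most `C(m, k - 1) ((k - 1) / m) ^ n`.
Hence `p S = 1 / C(m, k)` on each of the `C(m, k)` sets of size `k`, and the collision
probability is `∑ S, p S ^ 2 = 1 / C(m, k)`.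
-/

namespace LossyMapping

open Finset Function
open scoped NNReal

section Stopping

variable {α : Type*} [DecidableEq α] {k n n' : ℕ} {S : Finset α} {ω ω' : ℕ → α}

def StopsAt (k n : ℕ) (S : Finset α) (ω : ℕ → α) : Prop :=
  (range n).image ω = S ∧ ∀ j < n, ((range j).image ω).card < k

theorem stopsAt_congr (h : ∀ i < n, ω i = ω' i) : StopsAt k n S ω ↔ StopsAt k n S ω' := by
  have himage : ∀ j ≤ n, (range j).image ω = (range j).image ω' := fun j hj =>
    image_congr fun i hi => h i ((mem_range.mp hi).trans_le hj)
  unfold StopsAt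
  rw [himage n le_rfl]
  exact and_congr_right fun _ =>
    forall₂_congr fun j hj => by rw [himage j hj.le]

theorem StopsAt.unique (hS : S.card = k) (h : StopsAt k n S ω) (h' : StopsAt k n' S ω) :
    n = n' := by
  by_contra hne
  rcases Nat.lt_or_gt_of_ne hne with hlt | hlt
  · exact (h'.2 n hlt).ne (by rw [h.1, hS])
  · exact (h.2 n' hlt).ne (by rw [h'.1, hS])

theorem stopsAt_perm_iff (σ : Equiv.Perm α) :
    StopsAt k n (S.image σ) (σ ∘ ω) ↔ StopsAt k n S ω := by
  have himage : ∀ j, (range j).image (σ ∘ ω) = ((range j).image ω).image σ := fun j =>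
    image_image.symm
  simp only [StopsAt, himage, card_image_of_injective _ σ.injective,
    (image_injective σ.injective).eq_iff]

end Stopping

theorem card_filter_card_image_le {ι α : Type*} [Fintype ι] [DecidableEq ι] [Fintype α]
    [DecidableEq α] {j : ℕ} (hj : j ≤ Fintype.card α) :
    #{f : ι → α | #(univ.image f) ≤ j} ≤ (Fintype.card α).choose j * j ^ Fintype.card ι := by
  have hcover : ({f | #(univ.image f) ≤ j} : Finset (ι → α)) ⊆
      (powersetCard j univ).biUnion fun T => Fintype.piFinset fun _ : ι => T := by
    intro f hf
    obtain ⟨T, hfT, -, hT⟩ := exists_subsuperset_card_eq (subset_univ (univ.image f))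
      (mem_filter.mp hf).2 (by simpa using hj)
    exact mem_biUnion.mpr ⟨T, mem_powersetCard.mpr ⟨subset_univ T, hT⟩,
      Fintype.mem_piFinset.mpr fun i => hfT (mem_image_of_mem f (mem_univ i))⟩
  calc _ ≤ _ := card_le_card hcover
    _ ≤ ∑ T ∈ powersetCard j univ, #(Fintype.piFinset fun _ : ι => T) := card_biUnion_le
    _ = _ := by
      rw [sum_congr rfl fun T hT => by
          rw [Fintype.card_piFinset, prod_const, (mem_powersetCard.mp hT).2],
        sum_const, card_powersetCard, card_univ, card_univ, smul_eq_mul]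

variable {m k : ℕ}

theorem card_firstDistinct {ω : ℕ → Fin m} (h : ∃ n, k ≤ ((range n).image ω).card) :
    (firstDistinct k ω).card = k := by
  simp only [firstDistinct, dif_pos h]
  have hk := Nat.find_spec h
  rcases hfind : Nat.find h with _ | j <;> rw [hfind] at hk
  · simp only [range_zero, image_empty, card_empty] at hk ⊢
    omega
  · have hj : ((range j).image ω).card < k := by
      simpa using Nat.find_min h (hfind ▸ j.lt_succ_self)
    rw [range_add_one, image_insert] at hk ⊢
    have := card_insert_le (ω j) ((range j).image ω)
    omega

theorem firstDistinct_eq_iff {S : Finset (Fin m)} (hS : S.card = k) (ω : ℕ → Fin m) :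
    firstDistinct k ω = S ↔ ∃ n, StopsAt k n S ω := by
  constructor
  · intro hω
    by_cases h : ∃ n, k ≤ ((range n).image ω).card
    · refine ⟨Nat.find h, by rw [← hω]; simp only [firstDistinct, dif_pos h], fun j hj => ?_⟩
      simpa using Nat.find_min h hj
    · have hempty : firstDistinct k ω = ∅ := dif_neg h
      rw [hempty] at hω
      subst hω
      exact absurd ⟨0, hS.ge⟩ h
  · rintro ⟨n, hn, hmin⟩
    have h : ∃ n, k ≤ ((range n).image ω).card := ⟨n, by rw [hn, hS]⟩
    have hfind : Nat.find h = n :=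
      le_antisymm (Nat.find_le (by rw [hn, hS]))
        (not_lt.mp fun hlt => (hmin _ hlt).not_ge (Nat.find_spec h))
    simp only [firstDistinct, dif_pos h, hfind, hn]

section Prefix

variable {α : Type*}

def seqPrefix (n : ℕ) (ω : ℕ → α) : Fin n → α := fun i => ω i

theorem image_seqPrefix [DecidableEq α] (n : ℕ) (ω : ℕ → α) :
    univ.image (seqPrefix n ω) = (range n).image ω := by
  ext a
  simp [seqPrefix, Fin.exists_iff]

theorem measurable_seqPrefix [MeasurableSpace α] (n : ℕ) :
    Measurable (seqPrefix (α := α) n) :=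
  measurable_pi_lambda _ fun _ => measurable_pi_apply _

end Prefix

def extendZero [NeZero m] {n : ℕ} (f : Fin n → Fin m) : ℕ → Fin m :=
  fun i => if h : i < n then f ⟨i, h⟩ else 0

theorem seqPrefix_extendZero [NeZero m] {n : ℕ} (f : Fin n → Fin m) :
    seqPrefix n (extendZero f) = f :=
  funext fun i => dif_pos i.2

theorem seqPrefix_eq_iff [NeZero m] {n : ℕ} {ω : ℕ → Fin m} {f : Fin n → Fin m} :
    seqPrefix n ω = f ↔ ∀ i ∈ range n, ω i = extendZero f i := by
  conv_lhs => rw [← seqPrefix_extendZero f]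
  simp [funext_iff, seqPrefix, Fin.forall_iff]

def IsIIDUniformPair (μ : Measure ((ℕ → Fin m) × (ℕ → Fin m))) : Prop :=
  ∀ (s t : Finset ℕ) (f g : ℕ → Fin m),
    μ {ω | (∀ i ∈ s, ω.1 i = f i) ∧ (∀ j ∈ t, ω.2 j = g j)} =
      (1 / (m : ℝ≥0∞)) ^ s.card * (1 / (m : ℝ≥0∞)) ^ t.card

section Cylinder

variable {μ : Measure ((ℕ → Fin m) × (ℕ → Fin m))} {n n' : ℕ}

theorem measurableSet_seqPrefix_mem (A : Finset (Fin n → Fin m))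
    (B : Finset (Fin n' → Fin m)) :
    MeasurableSet {ω : (ℕ → Fin m) × (ℕ → Fin m) | seqPrefix n ω.1 ∈ A ∧ seqPrefix n' ω.2 ∈ B} :=
  ((measurable_seqPrefix n).comp measurable_fst A.measurableSet).inter
    ((measurable_seqPrefix n').comp measurable_snd B.measurableSet)

variable [NeZero m]

theorem IsIIDUniformPair.measure_seqPrefix_eq (hμ : IsIIDUniformPair μ)
    (f : Fin n → Fin m) (g : Fin n' → Fin m) :
    μ {ω | seqPrefix n ω.1 = f ∧ seqPrefix n' ω.2 = g} =
      (1 / (m : ℝ≥0∞)) ^ n * (1 / (m : ℝ≥0∞)) ^ n' := by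
  simpa only [card_range, seqPrefix_eq_iff] using
    hμ (range n) (range n') (extendZero f) (extendZero g)

theorem IsIIDUniformPair.measure_seqPrefix_mem (hμ : IsIIDUniformPair μ)
    (A : Finset (Fin n → Fin m)) (B : Finset (Fin n' → Fin m)) :
    μ {ω | seqPrefix n ω.1 ∈ A ∧ seqPrefix n' ω.2 ∈ B} =
      (#A * (1 / (m : ℝ≥0∞)) ^ n) * (#B * (1 / (m : ℝ≥0∞)) ^ n') := by
  have hunion : {ω : (ℕ → Fin m) × (ℕ → Fin m) | seqPrefix n ω.1 ∈ A ∧ seqPrefix n' ω.2 ∈ B} =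
      ⋃ p ∈ A ×ˢ B, {ω | seqPrefix n ω.1 = p.1 ∧ seqPrefix n' ω.2 = p.2} := by
    ext ω
    simp
  have hdisj : (↑(A ×ˢ B) : Set _).PairwiseDisjoint fun p : (Fin n → Fin m) × (Fin n' → Fin m) =>
      {ω : (ℕ → Fin m) × (ℕ → Fin m) | seqPrefix n ω.1 = p.1 ∧ seqPrefix n' ω.2 = p.2} := by
    intro p _ q _ hpq
    refine Set.disjoint_left.mpr fun ω hp hq => hpq ?_
    exact Prod.ext (hp.1.symm.trans hq.1) (hp.2.symm.trans hq.2)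
  rw [hunion, measure_biUnion_finset hdisj fun p _ =>
    measurableSet_seqPrefix_mem {p.1} {p.2} |>.congr (by ext; simp)]
  simp only [hμ.measure_seqPrefix_eq, sum_const, card_product, nsmul_eq_mul]
  push_cast
  ring

end Cylinder

section StopPatterns

variable [NeZero m] {n : ℕ} {S T : Finset (Fin m)}

open Classical in
noncomputable def stopPatterns (k n : ℕ) (S : Finset (Fin m)) : Finset (Fin n → Fin m) :=
  {f | StopsAt k n S (extendZero f)}

theorem seqPrefix_mem_stopPatterns {ω : ℕ → Fin m} :
    seqPrefix n ω ∈ stopPatterns k n S ↔ StopsAt k n S ω := by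
  classical
  simp only [stopPatterns, mem_filter, mem_univ, true_and]
  exact stopsAt_congr fun i hi => dif_pos hi

theorem comp_mem_stopPatterns_iff (σ : Equiv.Perm (Fin m)) {f : Fin n → Fin m} :
    σ ∘ f ∈ stopPatterns k n (S.image σ) ↔ f ∈ stopPatterns k n S := by
  rw [← seqPrefix_extendZero f]
  exact seqPrefix_mem_stopPatterns.trans
    ((stopsAt_perm_iff σ).trans seqPrefix_mem_stopPatterns.symm)

theorem card_stopPatterns_image (σ : Equiv.Perm (Fin m)) :
    #(stopPatterns k n (S.image σ)) = #(stopPatterns k n S) := by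
  refine card_nbij' (σ.symm ∘ ·) (σ ∘ ·) (fun g hg => ?_)
    (fun f hf => (comp_mem_stopPatterns_iff σ).mpr hf) (fun g _ => ?_) (fun f _ => ?_)
  · rw [mem_coe, ← comp_mem_stopPatterns_iff σ]
    simpa [Function.comp_def] using hg
  all_goals simp [Function.comp_def]

/-- The probability that the first `k` distinct values of a uniform sequence form `S`, split
according to the time at which the `k`-th distinct value appears. -/
noncomputable def firstDistinctProb (k : ℕ) (S : Finset (Fin m)) : ℝ≥0∞ :=
  ∑' n, #(stopPatterns k n S) * (1 / (m : ℝ≥0∞)) ^ n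

theorem firstDistinctProb_eq_of_card_eq (hST : S.card = T.card) :
    firstDistinctProb k S = firstDistinctProb k T := by
  obtain ⟨σ, hσ⟩ := (Set.powersetCard.isPretransitive (α := Fin m) (n := S.card)).exists_smul_eq
    ⟨S, rfl⟩ ⟨T, hST.symm⟩
  have hST : S.image σ = T := by
    simpa [Finset.smul_finset_def, Equiv.Perm.smul_def] using congrArg Subtype.val hσ
  simp only [firstDistinctProb, ← hST, card_stopPatterns_image]

end StopPatterns

section Events

variable [NeZero m] {μ : Measure ((ℕ → Fin m) × (ℕ → Fin m))} {S T : Finset (Fin m)}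

theorem setOf_firstDistinct_eq_and_eq (hS : S.card = k) (hT : T.card = k) :
    {ω : (ℕ → Fin m) × (ℕ → Fin m) | firstDistinct k ω.1 = S ∧ firstDistinct k ω.2 = T} =
      ⋃ q : ℕ × ℕ, {ω | seqPrefix q.1 ω.1 ∈ stopPatterns k q.1 S ∧
        seqPrefix q.2 ω.2 ∈ stopPatterns k q.2 T} := by
  ext ω
  simp only [Set.mem_ofPred_eq, Set.mem_iUnion, firstDistinct_eq_iff hS, firstDistinct_eq_iff hT,
    seqPrefix_mem_stopPatterns, Prod.exists, exists_and_left, exists_and_right]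

theorem measurableSet_firstDistinct_eq_and_eq (hS : S.card = k) (hT : T.card = k) :
    MeasurableSet
      {ω : (ℕ → Fin m) × (ℕ → Fin m) | firstDistinct k ω.1 = S ∧ firstDistinct k ω.2 = T} := by
  rw [setOf_firstDistinct_eq_and_eq hS hT]
  exact .iUnion fun _ => measurableSet_seqPrefix_mem _ _

theorem IsIIDUniformPair.measure_firstDistinct_eq_and_eq (hμ : IsIIDUniformPair μ)
    (hS : S.card = k) (hT : T.card = k) :
    μ {ω | firstDistinct k ω.1 = S ∧ firstDistinct k ω.2 = T} =
      firstDistinctProb k S * firstDistinctProb k T := by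
  have hdisj : Pairwise (Disjoint on fun q : ℕ × ℕ => {ω : (ℕ → Fin m) × (ℕ → Fin m) |
      seqPrefix q.1 ω.1 ∈ stopPatterns k q.1 S ∧ seqPrefix q.2 ω.2 ∈ stopPatterns k q.2 T}) := by
    intro q q' hqq'
    refine Set.disjoint_left.mpr fun ω hq hq' => hqq' ?_
    simp only [Set.mem_ofPred_eq, seqPrefix_mem_stopPatterns] at hq hq'
    exact Prod.ext (hq.1.unique hS hq'.1) (hq.2.unique hT hq'.2)
  rw [setOf_firstDistinct_eq_and_eq hS hT,
    measure_iUnion hdisj fun _ => measurableSet_seqPrefix_mem _ _]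
  simp only [hμ.measure_seqPrefix_mem, firstDistinctProb, ENNReal.tsum_prod',
    ENNReal.tsum_mul_left, ENNReal.tsum_mul_right]

theorem IsIIDUniformPair.measure_firstDistinct_mem (hμ : IsIIDUniformPair μ)
    (P : Finset (Finset (Fin m) × Finset (Fin m))) (hP : ∀ q ∈ P, q.1.card = k ∧ q.2.card = k)
    (hS : S.card = k) :
    μ {ω | (firstDistinct k ω.1, firstDistinct k ω.2) ∈ P} = #P * firstDistinctProb k S ^ 2 := by
  have hunion : {ω : (ℕ → Fin m) × (ℕ → Fin m) | (firstDistinct k ω.1, firstDistinct k ω.2) ∈ P} =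
      ⋃ q ∈ P, {ω | firstDistinct k ω.1 = q.1 ∧ firstDistinct k ω.2 = q.2} := by
    ext ω
    simp
  have hdisj : (↑P : Set _).PairwiseDisjoint fun q : Finset (Fin m) × Finset (Fin m) =>
      {ω : (ℕ → Fin m) × (ℕ → Fin m) | firstDistinct k ω.1 = q.1 ∧ firstDistinct k ω.2 = q.2} := by
    intro q _ q' _ hqq'
    refine Set.disjoint_left.mpr fun ω hq hq' => hqq' ?_
    exact Prod.ext (hq.1.symm.trans hq'.1) (hq.2.symm.trans hq'.2)
  rw [hunion, measure_biUnion_finset hdisj fun q hq =>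
      measurableSet_firstDistinct_eq_and_eq (hP q hq).1 (hP q hq).2,
    sum_congr rfl fun q hq => ?_, sum_const, nsmul_eq_mul]
  rw [hμ.measure_firstDistinct_eq_and_eq (hP q hq).1 (hP q hq).2, sq,
    firstDistinctProb_eq_of_card_eq ((hP q hq).1.trans hS.symm),
    firstDistinctProb_eq_of_card_eq ((hP q hq).2.trans hS.symm)]

theorem IsIIDUniformPair.ae_exists_lt_card_image_range (hμ : IsIIDUniformPair μ) {j : ℕ}
    (hj : j < m) :
    ∀ᵐ ω ∂μ, (∃ n, j < #((range n).image ω.1)) ∧ ∃ n, j < #((range n).image ω.2) := by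
  let bad (n : ℕ) : Finset (Fin n → Fin m) := {f | #(univ.image f) ≤ j}
  have hr : (j : ℝ≥0∞) / m < 1 :=
    ENNReal.div_lt_of_lt_mul (by rw [one_mul]; exact_mod_cast hj)
  refine ae_iff.mpr (ENNReal.eq_zero_of_le_mul_pow (ε := 2 * m.choose j) hr fun n => ?_)
  have hsub : {ω : (ℕ → Fin m) × (ℕ → Fin m) |
      ¬((∃ n, j < #((range n).image ω.1)) ∧ ∃ n, j < #((range n).image ω.2))} ⊆
      {ω | seqPrefix n ω.1 ∈ bad n ∧ seqPrefix 0 ω.2 ∈ univ} ∪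
        {ω | seqPrefix 0 ω.1 ∈ univ ∧ seqPrefix n ω.2 ∈ bad n} := by
    intro ω hω
    simp only [Set.mem_ofPred_eq, not_and_or, not_exists, not_lt] at hω
    simp only [Set.mem_union, Set.mem_ofPred_eq, mem_filter, mem_univ, true_and, and_true,
      image_seqPrefix, bad]
    exact hω.imp (· n) (· n)
  have hcard : (#(bad n) : ℝ≥0∞) ≤ (m.choose j * j ^ n : ℕ) := by
    exact_mod_cast (card_filter_card_image_le (ι := Fin n) (by simpa using hj.le)).trans
      (by simp)
  calc _ ≤ _ := measure_mono hsub
    _ ≤ _ := measure_union_le _ _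
    _ = 2 * (#(bad n) * (1 / (m : ℝ≥0∞)) ^ n) := by
      simp only [hμ.measure_seqPrefix_mem, card_univ, Fintype.card_pi, prod_const,
        Fintype.card_fin, pow_zero, Nat.cast_one, one_mul, mul_one]
      ring
    _ ≤ 2 * ((m.choose j * j ^ n : ℕ) * (1 / (m : ℝ≥0∞)) ^ n) := by gcongr
    _ = ((2 * m.choose j : ℝ≥0) : ℝ≥0∞) * ((j : ℝ≥0∞) / m) ^ n := by
      rw [div_eq_mul_one_div (j : ℝ≥0∞), mul_pow]
      push_cast
      ring

theorem IsIIDUniformPair.ae_mem_powersetCard_product (hμ : IsIIDUniformPair μ) (hkm : k ≤ m) :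
    ∀ᵐ ω ∂μ, (firstDistinct k ω.1, firstDistinct k ω.2) ∈
      powersetCard k (univ : Finset (Fin m)) ×ˢ powersetCard k univ := by
  have hk : k - 1 < m := by have := NeZero.pos m; omega
  filter_upwards [hμ.ae_exists_lt_card_image_range hk] with ω ⟨⟨n, hn⟩, ⟨n', hn'⟩⟩
  simp only [mem_product, mem_powersetCard, subset_univ, true_and]
  exact ⟨card_firstDistinct ⟨n, by omega⟩, card_firstDistinct ⟨n', by omega⟩⟩

theorem IsIIDUniformPair.choose_mul_firstDistinctProb [IsProbabilityMeasure μ]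
    (hμ : IsIIDUniformPair μ) (hkm : k ≤ m) (hS : S.card = k) :
    (m.choose k : ℝ≥0∞) * firstDistinctProb k S = 1 := by
  set K := powersetCard k (univ : Finset (Fin m))
  have htotal : μ {ω | (firstDistinct k ω.1, firstDistinct k ω.2) ∈ K ×ˢ K} = 1 := by
    rw [← measure_univ (μ := μ)]
    refine measure_congr (Filter.eventuallyEq_set.mpr ?_)
    filter_upwards [hμ.ae_mem_powersetCard_product hkm] with ω hω
    exact iff_of_true hω trivial
  rw [hμ.measure_firstDistinct_mem _ (fun q hq => ?_) hS] at htotal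
  · refine (ENNReal.pow_right_strictMono two_ne_zero).injective ?_
    rw [one_pow, ← htotal, card_product, card_powersetCard, card_univ, Fintype.card_fin]
    push_cast
    ring
  · simp only [K, mem_product, mem_powersetCard] at hq
    exact ⟨hq.1.2, hq.2.2⟩

end Events

end LossyMapping

open LossyMapping Finset

theorem lossy_mapping_collision_probability_general {m k : ℕ} (hm : 1 ≤ m)
    (hkm : k ≤ m)
    (μ : Measure ((ℕ → Fin m) × (ℕ → Fin m))) [IsProbabilityMeasure μ]
    (hiid : ∀ (s t : Finset ℕ) (f g : ℕ → Fin m),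
      μ {ω | (∀ i ∈ s, ω.1 i = f i) ∧ (∀ j ∈ t, ω.2 j = g j)} =
        (1 / (m : ℝ≥0∞)) ^ s.card * (1 / (m : ℝ≥0∞)) ^ t.card) :
    μ {ω | firstDistinct k ω.1 = firstDistinct k ω.2} = 1 / (Nat.choose m k : ℝ≥0∞) := by
  have : NeZero m := ⟨by omega⟩
  have hμ : IsIIDUniformPair μ := hiid
  set K := powersetCard k (univ : Finset (Fin m))
  obtain ⟨S, hS⟩ : K.Nonempty := powersetCard_nonempty.mpr (by simpa using hkm)
  have hSk : S.card = k := (mem_powersetCard.mp hS).2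
  have hCp := hμ.choose_mul_firstDistinctProb hkm hSk
  calc μ {ω | firstDistinct k ω.1 = firstDistinct k ω.2}
      = μ {ω | (firstDistinct k ω.1, firstDistinct k ω.2) ∈ K.diag} := by
        refine measure_congr (Filter.eventuallyEq_set.mpr ?_)
        filter_upwards [hμ.ae_mem_powersetCard_product hkm] with ω hω
        simp only [mem_diag]
        exact ⟨fun h => ⟨(mem_product.mp hω).1, h⟩, And.right⟩
    _ = m.choose k * firstDistinctProb k S ^ 2 := by
        rw [hμ.measure_firstDistinct_mem _ (fun q hq => ?_) hSk, diag_card, card_powersetCard,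
          card_univ, Fintype.card_fin]
        obtain ⟨hq, hq'⟩ := mem_diag.mp hq
        exact ⟨(mem_powersetCard.mp hq).2, hq' ▸ (mem_powersetCard.mp hq).2⟩
    _ = 1 / (m.choose k : ℝ≥0∞) := by
        rw [sq, ← mul_assoc, hCp, one_mul, one_div]
        exact ENNReal.eq_inv_of_mul_eq_one_left (by rw [mul_comm, hCp])

/-- **Collision probability of the lossy mapping.** Let `1 ≤ k ≤ m` and let `μ` be the
product of two independent infinite products of the uniform probability measure on `Fin m`
(characterized on cylinder sets). Then the probability that the set of the first `k`
pairwise-distinct values of the first sequence equals that of the second sequence is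
exactly `1 / C(m,k)`. -/
theorem lossy_mapping_collision_probability {m k : ℕ} (hm : 1 ≤ m) (hk : 1 ≤ k)
    (hkm : k ≤ m)
    (μ : Measure ((ℕ → Fin m) × (ℕ → Fin m))) [IsProbabilityMeasure μ]
    (hiid : ∀ (s t : Finset ℕ) (f g : ℕ → Fin m),
      μ {ω | (∀ i ∈ s, ω.1 i = f i) ∧ (∀ j ∈ t, ω.2 j = g j)} =
        (1 / (m : ℝ≥0∞)) ^ s.card * (1 / (m : ℝ≥0∞)) ^ t.card) :
    μ {ω | firstDistinct k ω.1 = firstDistinct k ω.2} = 1 / (Nat.choose m k : ℝ≥0∞) :=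
  lossy_mapping_collision_probability_general hm hkm μ hiid
end
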